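/- The map c ↦ c_{⟨d⟩} is (weakly) increasing in c, where for c with Macaulay expansion c = Σ_{i=1}^d binom(i + ε_i, i) in base d one defines c_{⟨d⟩} := Σ_{i=1}^d binom(i + ε_i - 1, i). -/

import Mathlib

/-- The term `binom(i + e, i)` of a Macaulay expansion, with the convention that
it vanishes when `i + e < i` (e.g. `binom(i-1, i) = 0` for `e = -1`). -/
def macaulayTerm (i : ℕ) (e : ℤ) : ℕ := ((i : ℤ) + e).toNat.choose i

/-- `ε : Fin d → ℤ`, where `ε i` stands for `ε_{i+1}`, is the Macaulay expansion of `c`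
in base `d`. -/
def IsMacaulayExpansion (d c : ℕ) (ε : Fin d → ℤ) : Prop :=
  Monotone ε ∧ (∀ i, -1 ≤ ε i) ∧ c = ∑ i : Fin d, macaulayTerm (i.1 + 1) (ε i)

/-- Given the Macaulay expansion `c = ∑ binom(i + ε_i, i)` in base `d`,
`c_{⟨d⟩} = ∑ binom(i + ε_i - 1, i)`. -/
def macaulayLower (d : ℕ) (ε : Fin d → ℤ) : ℕ :=
  ∑ i : Fin d, macaulayTerm (i.1 + 1) (ε i - 1)

/-!
Induct on `d` and compare the top exponents `t = ε_d`, `t' = ε'_d`. If they agree, both top terms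
cancel and the induction hypothesis applies to the remaining `d - 1` terms. Otherwise the
hockey-stick identity `∑_{i=1}^d binom(i + k, i) = binom(d + k + 1, d) - 1` shows that any sum
`∑ binom(i + ε_i, i)` with all `ε_i ≤ k` stays below `binom(d + k + 1, d)`.
Hence `t > t'` would force `c > c'`, while `t < t'` gives
`c_{⟨d⟩} ≤ binom(d + t, d) ≤ binom(d + t' - 1, d) ≤ c'_{⟨d⟩}`.
-/

def macaulaySum (d : ℕ) (ε : Fin d → ℤ) : ℕ :=
  ∑ i : Fin d, macaulayTerm (i.1 + 1) (ε i)

namespace macaulayTerm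

lemma mono (i : ℕ) {e e' : ℤ} (h : e ≤ e') : macaulayTerm i e ≤ macaulayTerm i e' :=
  Nat.choose_le_choose i (Int.toNat_le_toNat (by omega))

lemma eq_zero_of_neg {i : ℕ} {e : ℤ} (hi : 0 < i) (he : e < 0) : macaulayTerm i e = 0 :=
  Nat.choose_eq_zero_of_lt (by omega)

lemma zero_right (k : ℤ) : macaulayTerm 0 k = 1 := Nat.choose_zero_right _

lemma succ_succ (i : ℕ) {k : ℤ} (hk : -1 ≤ k) :
    macaulayTerm (i + 1) (k + 1) = macaulayTerm i (k + 1) + macaulayTerm (i + 1) k := by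
  have hn : ((↑(i + 1) : ℤ) + (k + 1)).toNat = ((i : ℤ) + (k + 1)).toNat + 1 := by omega
  have hn' : ((↑(i + 1) : ℤ) + k).toNat = ((i : ℤ) + (k + 1)).toNat := by omega
  rw [macaulayTerm, macaulayTerm, macaulayTerm, hn, hn', Nat.choose_succ_succ]

end macaulayTerm

namespace macaulaySum

lemma succ (d : ℕ) (ε : Fin (d + 1) → ℤ) :
    macaulaySum (d + 1) ε =
      macaulaySum d (fun i ↦ ε i.castSucc) + macaulayTerm (d + 1) (ε (Fin.last d)) :=
  Fin.sum_univ_castSucc _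

lemma macaulayTerm_last_le (d : ℕ) (ε : Fin (d + 1) → ℤ) :
    macaulayTerm (d + 1) (ε (Fin.last d)) ≤ macaulaySum (d + 1) ε := by
  rw [succ]
  exact Nat.le_add_left _ _

lemma mono {d : ℕ} {ε ε' : Fin d → ℤ} (h : ε ≤ ε') : macaulaySum d ε ≤ macaulaySum d ε' :=
  Finset.sum_le_sum fun i _ ↦ macaulayTerm.mono _ (h i)

lemma const_add_one (d : ℕ) {k : ℤ} (hk : -1 ≤ k) :
    macaulaySum d (fun _ ↦ k) + 1 = macaulayTerm d (k + 1) := by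
  induction d with
  | zero => rw [macaulayTerm.zero_right]; rfl
  | succ d ih => rw [succ, add_right_comm, ih, ← macaulayTerm.succ_succ d hk]

lemma lt_macaulayTerm {d : ℕ} {ε : Fin d → ℤ} {k : ℤ} (hk : -1 ≤ k) (hε : ∀ i, ε i ≤ k) :
    macaulaySum d ε < macaulayTerm d (k + 1) := by
  rw [← const_add_one d hk, Nat.lt_succ_iff]
  exact mono hε

lemma le_macaulayTerm {d : ℕ} {ε : Fin d → ℤ} {k : ℤ} (hε : ∀ i, ε i ≤ k) :
    macaulaySum d ε ≤ macaulayTerm d (k + 1) := by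
  rcases lt_or_ge k (-1) with hk | hk
  · have hzero : macaulaySum d ε = 0 :=
      Finset.sum_eq_zero fun i _ ↦
        macaulayTerm.eq_zero_of_neg i.1.succ_pos (by have := hε i; omega)
    exact hzero ▸ Nat.zero_le _
  · exact (lt_macaulayTerm hk hε).le

lemma sub_one_le_of_le {d : ℕ} {ε ε' : Fin d → ℤ} (hε : Monotone ε) (hε' : Monotone ε')
    (hε'_ge : ∀ i, -1 ≤ ε' i) (hle : macaulaySum d ε ≤ macaulaySum d ε') :
    macaulaySum d (ε - 1) ≤ macaulaySum d (ε' - 1) := by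
  induction d with
  | zero => exact le_rfl
  | succ d ih =>
    set t := ε (Fin.last d)
    set t' := ε' (Fin.last d)
    rcases lt_trichotomy t t' with htt' | htt' | htt'
    · calc macaulaySum (d + 1) (ε - 1)
          ≤ macaulayTerm (d + 1) (t - 1 + 1) :=
            le_macaulayTerm fun i ↦ by simpa using hε (Fin.le_last i)
        _ ≤ macaulayTerm (d + 1) (t' - 1) := macaulayTerm.mono _ (by omega)
        _ ≤ macaulaySum (d + 1) (ε' - 1) := macaulayTerm_last_le d (ε' - 1)
    · rw [succ, succ] at hle ⊢
      simp only [Pi.sub_apply, Pi.one_apply, t, t'] at htt' ⊢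
      rw [htt'] at hle ⊢
      exact Nat.add_le_add_right (ih (hε.comp Fin.strictMono_castSucc.monotone)
        (hε'.comp Fin.strictMono_castSucc.monotone) (fun i ↦ hε'_ge _)
        (Nat.le_of_add_le_add_right hle)) _
    · refine absurd hle (not_le.mpr ?_)
      calc macaulaySum (d + 1) ε'
          < macaulayTerm (d + 1) (t' + 1) := lt_macaulayTerm (hε'_ge _) fun i ↦ hε' (Fin.le_last i)
        _ ≤ macaulayTerm (d + 1) t := macaulayTerm.mono _ (by omega)
        _ ≤ macaulaySum (d + 1) ε := macaulayTerm_last_le d ε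

end macaulaySum

/-- the map `c ↦ c_{⟨d⟩}` is weakly increasing in `c`. -/
theorem macaulayLower_mono (d c c' : ℕ) (ε ε' : Fin d → ℤ)
    (h : IsMacaulayExpansion d c ε) (h' : IsMacaulayExpansion d c' ε')
    (hcc : c ≤ c') :
    macaulayLower d ε ≤ macaulayLower d ε' := by
  obtain ⟨hε, -, rfl⟩ := h
  obtain ⟨hε', hε'_ge, rfl⟩ := h'
  exact macaulaySum.sub_one_le_of_le hε hε' hε'_ge hcc
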